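/- arXiv:math/0407210 — 2 statements merged into one kernel-verified Lean document; each statement's English description precedes it below -/
import Mathlib

section
/- For the dyadic-parabolic pseudo-distance on curvelet indices, there exist absolute constants c₁, c₂ > 0 such that for all curvelet indices μ, μ' one has c₁·ω(μ',μ) ≤ ω(μ,μ') ≤ c₂·ω(μ',μ); in particular c₁·d(μ',μ) ≤ d(μ,μ') ≤ c₂·d(μ',μ). -/
noncomputable section

open MeasureTheory Real Set
open scoped ContDiff

/-- Rotation of the plane by the angle `θ`. -/
def rot2 (θ : ℝ) (p : ℝ × ℝ) : ℝ × ℝ :=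
  (Real.cos θ * p.1 - Real.sin θ * p.2, Real.sin θ * p.1 + Real.cos θ * p.2)

/-- Euclidean norm on `ℝ × ℝ`. -/
def enorm2 (p : ℝ × ℝ) : ℝ := Real.sqrt (p.1 ^ 2 + p.2 ^ 2)

/-- Euclidean inner product on `ℝ × ℝ`. -/
def dot2 (p q : ℝ × ℝ) : ℝ := p.1 * q.1 + p.2 * q.2

/-- The angle (argument) of a plane vector. -/
def argOf (p : ℝ × ℝ) : ℝ := Complex.arg ((p.1 : ℂ) + (p.2 : ℂ) * Complex.I)

/-- Distance between two angles, taken modulo `π`. -/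
def angleDist (a b : ℝ) : ℝ := ⨅ n : ℤ, |a - b - (n : ℝ) * Real.pi|

/-- A curvelet index `μ = (j, k, ℓ)`: scale `j`, position `k`, angular index `ℓ < 2^⌊j/2⌋`. -/
structure CurveletIndex where
  j : ℕ
  k : ℤ × ℤ
  l : ℕ
  hl : l < 2 ^ (j / 2)

namespace CurveletIndex

/-- The orientation angle `θ_μ = 2π ℓ 2^{-⌊j/2⌋}`. -/
def θ (μ : CurveletIndex) : ℝ := 2 * Real.pi * (μ.l : ℝ) * (2 : ℝ) ^ (-((μ.j / 2 : ℕ) : ℝ))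

/-- The codirection `e_μ = (cos θ_μ, sin θ_μ)`. -/
def e (μ : CurveletIndex) : ℝ × ℝ := (Real.cos μ.θ, Real.sin μ.θ)

/-- The spatial position `x_μ = R_{θ_μ}^{-1} (k₁ 2^{-j}, k₂ 2^{-j/2})`. -/
def pos (μ : CurveletIndex) : ℝ × ℝ :=
  rot2 (-μ.θ) ((μ.k.1 : ℝ) * (2 : ℝ) ^ (-(μ.j : ℝ)), (μ.k.2 : ℝ) * (2 : ℝ) ^ (-(μ.j : ℝ) / 2))

/-- The frequency center `ξ_μ = 2^j e_μ`. -/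
def ξc (μ : CurveletIndex) : ℝ × ℝ :=
  ((2 : ℝ) ^ (μ.j : ℝ) * μ.e.1, (2 : ℝ) ^ (μ.j : ℝ) * μ.e.2)

end CurveletIndex

/-- The pseudo-distance `d(μ, μ')`. -/
def dpar (μ μ' : CurveletIndex) : ℝ :=
  angleDist μ.θ μ'.θ ^ 2 + ((μ.pos.1 - μ'.pos.1) ^ 2 + (μ.pos.2 - μ'.pos.2) ^ 2) +
    |dot2 μ.e (μ.pos.1 - μ'.pos.1, μ.pos.2 - μ'.pos.2)|

/-- The dyadic-parabolic pseudo-distance `ω(μ, μ')`. -/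
def om (μ μ' : CurveletIndex) : ℝ :=
  (2 : ℝ) ^ |(μ.j : ℝ) - (μ'.j : ℝ)| *
    (1 + min ((2 : ℝ) ^ (μ.j : ℝ)) ((2 : ℝ) ^ (μ'.j : ℝ)) * dpar μ μ')

/-! The prefactor of `ω` and the minimum in it are symmetric in `μ, μ'`, so it suffices to
compare `d(μ, μ')` with `d(μ', μ)`. There the only asymmetric term is `|⟨e_μ, x_μ - x_μ'⟩|`.
Since `e_μ` is determined up to sign by `θ_μ` mod `π`, and `θ ↦ (cos θ, sin θ)` is 1-Lipschitz,
replacing `e_μ` by `e_μ'` costs at most `|θ_μ - θ_μ'|·|x_μ - x_μ'|`, which AM-GM bounds by half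
of the symmetric part `|θ_μ - θ_μ'|² + |x_μ - x_μ'|²`. -/

lemma angleDist_nonneg (a b : ℝ) : 0 ≤ angleDist a b :=
  le_ciInf fun _ => abs_nonneg _

lemma angleDist_comm (a b : ℝ) : angleDist a b = angleDist b a := by
  unfold angleDist
  rw [← (Equiv.neg ℤ).iInf_comp]
  congr 1
  ext n
  rw [← abs_neg, Equiv.neg_apply, Int.cast_neg]
  ring_nf

lemma cos_sub_cos_sq_add_sin_sub_sin_sq_le (a b : ℝ) :
    (cos a - cos b) ^ 2 + (sin a - sin b) ^ 2 ≤ (a - b) ^ 2 := by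
  have hcos := one_sub_sq_div_two_le_cos (x := a - b)
  rw [cos_sub] at hcos
  nlinarith [sin_sq_add_cos_sq a, sin_sq_add_cos_sq b]

lemma abs_dot2_cos_sin_le (a b : ℝ) (w : ℝ × ℝ) :
    |dot2 (cos a, sin a) w| ≤ |dot2 (cos b, sin b) w| + |a - b| * enorm2 w := by
  have hw : enorm2 w ^ 2 = w.1 ^ 2 + w.2 ^ 2 := Real.sq_sqrt (by positivity)
  have hdiff : |dot2 (cos a - cos b, sin a - sin b) w| ≤ |a - b| * enorm2 w := by
    refine abs_le_of_sq_le_sq ?_ (by unfold enorm2; positivity)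
    rw [mul_pow, sq_abs, hw]
    unfold dot2
    nlinarith [cos_sub_cos_sq_add_sin_sub_sin_sq_le a b,
      sq_nonneg ((cos a - cos b) * w.2 - (sin a - sin b) * w.1)]
  calc |dot2 (cos a, sin a) w|
      = |dot2 (cos b, sin b) w + dot2 (cos a - cos b, sin a - sin b) w| := by
        unfold dot2; ring_nf
    _ ≤ _ := (abs_add_le _ _).trans (by gcongr)

lemma abs_dot2_cos_sin_add_int_mul_pi (b : ℝ) (n : ℤ) (w : ℝ × ℝ) :
    |dot2 (cos (b + n * π), sin (b + n * π)) w| = |dot2 (cos b, sin b) w| := by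
  have h : dot2 (cos (b + n * π), sin (b + n * π)) w = (-1) ^ n * dot2 (cos b, sin b) w := by
    unfold dot2
    rw [cos_add_int_mul_pi, sin_add_int_mul_pi]
    ring
  rw [h, abs_mul, abs_zpow, abs_neg, abs_one, one_zpow, one_mul]

lemma abs_dot2_cos_sin_le_angleDist (a b : ℝ) (w : ℝ × ℝ) :
    |dot2 (cos a, sin a) w| ≤ |dot2 (cos b, sin b) w| + angleDist a b * enorm2 w := by
  suffices |dot2 (cos a, sin a) w| - |dot2 (cos b, sin b) w| ≤ angleDist a b * enorm2 w by
    linarith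
  have hw : 0 ≤ enorm2 w := Real.sqrt_nonneg _
  rw [angleDist, Real.iInf_mul_of_nonneg hw]
  refine le_ciInf fun n => ?_
  have h := abs_dot2_cos_sin_le a (b + n * π) w
  rw [abs_dot2_cos_sin_add_int_mul_pi, ← sub_sub] at h
  linarith

lemma dpar_le_three_halves_mul_dpar_swap (μ μ' : CurveletIndex) :
    dpar μ μ' ≤ 3 / 2 * dpar μ' μ := by
  set w : ℝ × ℝ := (μ.pos.1 - μ'.pos.1, μ.pos.2 - μ'.pos.2)
  set A := angleDist μ.θ μ'.θ
  have hswap : dpar μ' μ = A ^ 2 + (w.1 ^ 2 + w.2 ^ 2) + |dot2 μ'.e w| := by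
    rw [dpar, angleDist_comm, ← abs_neg]
    simp only [w, A, dot2]
    ring_nf
  have hw : enorm2 w ^ 2 = w.1 ^ 2 + w.2 ^ 2 := Real.sq_sqrt (by positivity)
  have hturn : |dot2 μ.e w| ≤ |dot2 μ'.e w| + A * enorm2 w :=
    abs_dot2_cos_sin_le_angleDist μ.θ μ'.θ w
  have hamgm : A * enorm2 w ≤ (A ^ 2 + enorm2 w ^ 2) / 2 := by
    nlinarith [sq_nonneg (A - enorm2 w)]
  have hdef : dpar μ μ' = A ^ 2 + (w.1 ^ 2 + w.2 ^ 2) + |dot2 μ.e w| := rfl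
  rw [hswap, hdef]
  linarith [abs_nonneg (dot2 μ'.e w)]

lemma om_le_of_dpar_le {c : ℝ} (hc : 1 ≤ c) {μ μ' : CurveletIndex}
    (h : dpar μ μ' ≤ c * dpar μ' μ) : om μ μ' ≤ c * om μ' μ := by
  rw [om, om, abs_sub_comm, min_comm ((2 : ℝ) ^ (μ'.j : ℝ)), mul_left_comm]
  gcongr
  have hm : 0 ≤ min ((2 : ℝ) ^ (μ.j : ℝ)) ((2 : ℝ) ^ (μ'.j : ℝ)) := by positivity
  nlinarith [mul_le_mul_of_nonneg_left h hm]

/-- the dyadic-parabolic pseudo-distance `ω` (and `d`) is symmetric up to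
absolute multiplicative constants. -/
theorem omega_symm :
    ∃ c₁ c₂ : ℝ, 0 < c₁ ∧ 0 < c₂ ∧
      ∀ μ μ' : CurveletIndex,
        (c₁ * om μ' μ ≤ om μ μ' ∧ om μ μ' ≤ c₂ * om μ' μ) ∧
        (c₁ * dpar μ' μ ≤ dpar μ μ' ∧ dpar μ μ' ≤ c₂ * dpar μ' μ) := by
  refine ⟨2 / 3, 3 / 2, by norm_num, by norm_num, fun μ μ' => ?_⟩
  have hd := dpar_le_three_halves_mul_dpar_swap μ μ'
  have hd' := dpar_le_three_halves_mul_dpar_swap μ' μ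
  have ho := om_le_of_dpar_le (by norm_num) hd
  have ho' := om_le_of_dpar_le (by norm_num) hd'
  exact ⟨⟨by linarith, ho⟩, ⟨by linarith, hd⟩⟩
end
end

section
/- There exists an absolute constant C > 0 such that for all curvelet indices μ, μ', μ'' one has the quasi-triangle inequality d(μ,μ') ≤ C·(d(μ,μ'') + d(μ'',μ')). -/
noncomputable section

open MeasureTheory Real Set
open scoped ContDiff

lemma angleDist_bddBelow (a b : ℝ) :
    BddBelow (Set.range fun n : ℤ => |a - b - (n : ℝ) * Real.pi|) :=
  ⟨0, by rintro x ⟨n, rfl⟩; exact abs_nonneg _⟩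

lemma angleDist_le (a b : ℝ) (n : ℤ) : angleDist a b ≤ |a - b - (n : ℝ) * Real.pi| :=
  ciInf_le (angleDist_bddBelow a b) n

lemma angleDist_triangle (a c b : ℝ) :
    angleDist a b ≤ angleDist a c + angleDist c b := by
  have key : ∀ n m : ℤ, angleDist a b ≤
      |a - c - (n : ℝ) * Real.pi| + |c - b - (m : ℝ) * Real.pi| := by
    intro n m
    calc angleDist a b ≤ |a - b - ((n + m : ℤ) : ℝ) * Real.pi| := angleDist_le a b (n + m)
      _ ≤ |a - c - (n : ℝ) * Real.pi| + |c - b - (m : ℝ) * Real.pi| := by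
          push_cast
          have : a - b - ((n : ℝ) + (m : ℝ)) * Real.pi =
              (a - c - (n : ℝ) * Real.pi) + (c - b - (m : ℝ) * Real.pi) := by ring
          rw [this]; exact abs_add_le _ _
  rw [angleDist, angleDist, ← sub_le_iff_le_add]
  refine le_ciInf fun n => ?_
  rw [sub_le_iff_le_add, ← sub_le_iff_le_add']
  refine le_ciInf fun m => ?_
  rw [sub_le_iff_le_add']
  exact key n m

lemma abs_dot2_le (p q : ℝ × ℝ) : |dot2 p q| ≤ enorm2 p * enorm2 q := by
  have h1 : |dot2 p q| = Real.sqrt (dot2 p q ^ 2) := (Real.sqrt_sq_eq_abs _).symm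
  have h2 : enorm2 p * enorm2 q = Real.sqrt ((p.1 ^ 2 + p.2 ^ 2) * (q.1 ^ 2 + q.2 ^ 2)) :=
    (Real.sqrt_mul (by positivity) _).symm
  rw [h1, h2]
  apply Real.sqrt_le_sqrt
  unfold dot2
  nlinarith [sq_nonneg (p.1 * q.2 - p.2 * q.1)]

lemma chord_le (a c : ℝ) :
    enorm2 (Real.cos a - Real.cos c, Real.sin a - Real.sin c) ≤ |a - c| := by
  unfold enorm2
  rw [← Real.sqrt_sq_eq_abs]
  apply Real.sqrt_le_sqrt
  show (Real.cos a - Real.cos c) ^ 2 + (Real.sin a - Real.sin c) ^ 2 ≤ (a - c) ^ 2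
  have hc : Real.cos (a - c) = Real.cos a * Real.cos c + Real.sin a * Real.sin c :=
    Real.cos_sub a c
  have hb : 1 - (a - c) ^ 2 / 2 ≤ Real.cos (a - c) := Real.one_sub_sq_div_two_le_cos
  have ha := Real.sin_sq_add_cos_sq a
  have hcc := Real.sin_sq_add_cos_sq c
  nlinarith

lemma dot2_flip (b : ℝ) (n : ℤ) (v : ℝ × ℝ) :
    |dot2 (Real.cos (b + n * Real.pi), Real.sin (b + n * Real.pi)) v| =
      |dot2 (Real.cos b, Real.sin b) v| := by
  have hs : Real.sin ((n : ℝ) * Real.pi) = 0 := Real.sin_int_mul_pi n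
  have hc : |Real.cos ((n : ℝ) * Real.pi)| = 1 := by
    have := Real.sin_sq_add_cos_sq ((n : ℝ) * Real.pi)
    rw [hs] at this
    have h1 : Real.cos ((n : ℝ) * Real.pi) ^ 2 = 1 := by nlinarith
    rw [← Real.sqrt_sq_eq_abs, h1, Real.sqrt_one]
  have hca : Real.cos (b + n * Real.pi) = Real.cos b * Real.cos ((n : ℝ) * Real.pi) := by
    rw [Real.cos_add, hs]; ring
  have hsa : Real.sin (b + n * Real.pi) = Real.sin b * Real.cos ((n : ℝ) * Real.pi) := by
    rw [Real.sin_add, hs]; ring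
  unfold dot2
  rw [hca, hsa]
  have : Real.cos b * Real.cos ((n : ℝ) * Real.pi) * v.1 +
      Real.sin b * Real.cos ((n : ℝ) * Real.pi) * v.2 =
      Real.cos ((n : ℝ) * Real.pi) * (Real.cos b * v.1 + Real.sin b * v.2) := by ring
  rw [this, abs_mul, hc, one_mul]

lemma dot2_angle_compare (a b : ℝ) (v : ℝ × ℝ) :
    |dot2 (Real.cos a, Real.sin a) v| ≤
      |dot2 (Real.cos b, Real.sin b) v| + angleDist a b * enorm2 v := by
  have hstep : ∀ n : ℤ, |dot2 (Real.cos a, Real.sin a) v| ≤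
      |dot2 (Real.cos b, Real.sin b) v| + |a - b - (n : ℝ) * Real.pi| * enorm2 v := by
    intro n
    set c := b + (n : ℝ) * Real.pi with hcdef
    have hsplit : dot2 (Real.cos a, Real.sin a) v =
        dot2 (Real.cos c, Real.sin c) v +
          dot2 (Real.cos a - Real.cos c, Real.sin a - Real.sin c) v := by
      unfold dot2; ring
    calc |dot2 (Real.cos a, Real.sin a) v|
        ≤ |dot2 (Real.cos c, Real.sin c) v| +
            |dot2 (Real.cos a - Real.cos c, Real.sin a - Real.sin c) v| := by
          rw [hsplit]; exact abs_add_le _ _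
      _ ≤ |dot2 (Real.cos b, Real.sin b) v| + |a - b - (n : ℝ) * Real.pi| * enorm2 v := by
          have h1 : |dot2 (Real.cos c, Real.sin c) v| = |dot2 (Real.cos b, Real.sin b) v| :=
            dot2_flip b n v
          have h2 : |dot2 (Real.cos a - Real.cos c, Real.sin a - Real.sin c) v| ≤
              |a - c| * enorm2 v := by
            calc |dot2 (Real.cos a - Real.cos c, Real.sin a - Real.sin c) v| ≤
                enorm2 (Real.cos a - Real.cos c, Real.sin a - Real.sin c) * enorm2 v :=
                  abs_dot2_le _ _
              _ ≤ |a - c| * enorm2 v := by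
                  have := chord_le a c
                  have hv : 0 ≤ enorm2 v := Real.sqrt_nonneg _
                  exact mul_le_mul_of_nonneg_right this hv
          have h3 : |a - c| = |a - b - (n : ℝ) * Real.pi| := by
            rw [hcdef]; ring_nf
          rw [h1]
          rw [h3] at h2
          linarith
  by_cases hv : enorm2 v = 0
  · -- enorm2 v = 0, so v = 0
    have h0 : v.1 ^ 2 + v.2 ^ 2 = 0 := by
      have hz : Real.sqrt (v.1 ^ 2 + v.2 ^ 2) = 0 := hv
      have hle : v.1 ^ 2 + v.2 ^ 2 ≤ 0 := by
        by_contra hpos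
        push_neg at hpos
        exact absurd hz (by positivity)
      nlinarith [sq_nonneg v.1, sq_nonneg v.2]
    have hv1 : v.1 = 0 := by nlinarith [sq_nonneg v.1, sq_nonneg v.2]
    have hv2 : v.2 = 0 := by nlinarith [sq_nonneg v.1, sq_nonneg v.2]
    have hL : dot2 (Real.cos a, Real.sin a) v = 0 := by simp [dot2, hv1, hv2]
    have hE : (0:ℝ) ≤ enorm2 v := Real.sqrt_nonneg _
    rw [hL, abs_zero]
    exact add_nonneg (abs_nonneg _) (mul_nonneg (angleDist_nonneg a b) hE)
  · have hv' : 0 < enorm2 v :=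
      lt_of_le_of_ne (Real.sqrt_nonneg _) (Ne.symm hv)
    rw [← sub_le_iff_le_add']
    rw [show angleDist a b * enorm2 v = enorm2 v * angleDist a b from mul_comm _ _]
    rw [← div_le_iff₀' hv']
    refine le_ciInf fun n => ?_
    rw [div_le_iff₀' hv']
    have := hstep n
    linarith [mul_comm (|a - b - (n : ℝ) * Real.pi|) (enorm2 v)]

lemma combine_arith (A A1 A2 s s1 s2 D D1 D2 E : ℝ)
    (hA10 : 0 ≤ A1) (hA20 : 0 ≤ A2)
    (hs1 : 0 ≤ s1) (hs2 : 0 ≤ s2) (hD1 : 0 ≤ D1) (hD2 : 0 ≤ D2)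
    (hE2 : E ^ 2 = s2)
    (hA : A ≤ A1 + A2) (hA0 : 0 ≤ A) (hs : s ≤ 2 * s1 + 2 * s2)
    (hD : D ≤ D1 + D2 + A1 * E) :
    A ^ 2 + s + D ≤ 3 * ((A1 ^ 2 + s1 + D1) + (A2 ^ 2 + s2 + D2)) := by
  nlinarith [sq_nonneg (A1 - A2), sq_nonneg (A1 - E), mul_le_mul hA hA hA0 (by linarith)]

/-- quasi-triangle inequality for the pseudo-distance `d` on curvelet indices. -/
theorem dpar_quasi_triangle :
    ∃ C : ℝ, 0 < C ∧ ∀ μ μ' μ'' : CurveletIndex,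
      dpar μ μ' ≤ C * (dpar μ μ'' + dpar μ'' μ') := by
  refine ⟨3, by norm_num, fun μ μ' μ'' => ?_⟩
  have hA : angleDist μ.θ μ'.θ ≤ angleDist μ.θ μ''.θ + angleDist μ''.θ μ'.θ :=
    angleDist_triangle _ _ _
  have hdsplit : dot2 μ.e (μ.pos.1 - μ'.pos.1, μ.pos.2 - μ'.pos.2) =
      dot2 μ.e (μ.pos.1 - μ''.pos.1, μ.pos.2 - μ''.pos.2) +
        dot2 μ.e (μ''.pos.1 - μ'.pos.1, μ''.pos.2 - μ'.pos.2) := by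
    unfold dot2; ring
  have hcomp : |dot2 μ.e (μ''.pos.1 - μ'.pos.1, μ''.pos.2 - μ'.pos.2)| ≤
      |dot2 μ''.e (μ''.pos.1 - μ'.pos.1, μ''.pos.2 - μ'.pos.2)| +
        angleDist μ.θ μ''.θ * enorm2 (μ''.pos.1 - μ'.pos.1, μ''.pos.2 - μ'.pos.2) :=
    dot2_angle_compare μ.θ μ''.θ _
  have hdot : |dot2 μ.e (μ.pos.1 - μ'.pos.1, μ.pos.2 - μ'.pos.2)| ≤
      |dot2 μ.e (μ.pos.1 - μ''.pos.1, μ.pos.2 - μ''.pos.2)| +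
        |dot2 μ''.e (μ''.pos.1 - μ'.pos.1, μ''.pos.2 - μ'.pos.2)| +
        angleDist μ.θ μ''.θ * enorm2 (μ''.pos.1 - μ'.pos.1, μ''.pos.2 - μ'.pos.2) := by
    calc |dot2 μ.e (μ.pos.1 - μ'.pos.1, μ.pos.2 - μ'.pos.2)|
        ≤ |dot2 μ.e (μ.pos.1 - μ''.pos.1, μ.pos.2 - μ''.pos.2)| +
            |dot2 μ.e (μ''.pos.1 - μ'.pos.1, μ''.pos.2 - μ'.pos.2)| := by
          rw [hdsplit]; exact abs_add_le _ _
      _ ≤ _ := by linarith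
  show dpar μ μ' ≤ 3 * (dpar μ μ'' + dpar μ'' μ')
  unfold dpar
  refine combine_arith _ _ _ _ _ _ _ _ _
      (enorm2 (μ''.pos.1 - μ'.pos.1, μ''.pos.2 - μ'.pos.2))
      (angleDist_nonneg _ _) (angleDist_nonneg _ _) (by positivity) (by positivity)
      (abs_nonneg _) (abs_nonneg _) ?_ hA (angleDist_nonneg _ _) ?_ hdot
  · exact Real.sq_sqrt (by positivity)
  · nlinarith [sq_nonneg ((μ.pos.1 - μ''.pos.1) - (μ''.pos.1 - μ'.pos.1)),
      sq_nonneg ((μ.pos.2 - μ''.pos.2) - (μ''.pos.2 - μ'.pos.2))]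
end
end
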